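/- arXiv:1909.02137 — 2 statements merged into one kernel-verified Lean document; each statement's English description precedes it below -/
import Mathlib

section
/- Let f : ℂ → ℂ be analytic at z with f'(z) ≠ 0 and f''(z) ≠ 0, set s = S f (the Schwarzian derivative), and let g = D f, i.e. g(w) = f(w) − 2·f'(w)²/f''(w) near z. If g''(z) ≠ 0 and s(z)² − (f''(z)/(2·f'(z)))·s'(z) ≠ 0, then g(z) − 2·g'(z)²/g''(z) = f(z) + f'(z)·s'(z)/(s(z)² − (f''(z)/(2·f'(z)))·s'(z)). -/
/-- The Schwarzian derivative `S f (z) = f'''(z)/f'(z) − (3/2)·(f''(z)/f'(z))²`. -/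
noncomputable def schwarzian (f : ℂ → ℂ) (z : ℂ) : ℂ :=
  deriv (deriv (deriv f)) z / deriv f z - (3 / 2) * (deriv (deriv f) z / deriv f z) ^ 2

/-! Differentiating `D f = f - 2 f'²/f''` gives `(D f)' = 2 f'³ S f / f''²`. Differentiating once
more and eliminating `f'''` through `f''' = f' · S f + (3/2) f''²/f'` leaves
`(D f)'' = 2 f'³ (f'' · (S f)' - 2 f' · (S f)²) / f''³`, after which `D (D f)` is a rational
identity in `f, f', f'', S f, (S f)'`. -/

open Topology

noncomputable def equivariantDeriv (f : ℂ → ℂ) (w : ℂ) : ℂ :=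
  f w - 2 * deriv f w ^ 2 / deriv (deriv f) w

lemma deriv_deriv_deriv_eq_schwarzian {f : ℂ → ℂ} {z : ℂ} (hf' : deriv f z ≠ 0) :
    deriv (deriv (deriv f)) z
      = deriv f z * schwarzian f z + 3 / 2 * deriv (deriv f) z ^ 2 / deriv f z := by
  unfold schwarzian
  field_simp
  ring

lemma AnalyticAt.schwarzian {f : ℂ → ℂ} {z : ℂ} (hf : AnalyticAt ℂ f z)
    (hf' : deriv f z ≠ 0) : AnalyticAt ℂ (schwarzian f) z :=
  (hf.deriv.deriv.deriv.div hf.deriv hf').sub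
    (analyticAt_const.mul ((hf.deriv.deriv.div hf.deriv hf').pow 2))

lemma hasDerivAt_equivariantDeriv {f : ℂ → ℂ} {w : ℂ} (hf : AnalyticAt ℂ f w)
    (hf'' : deriv (deriv f) w ≠ 0) :
    HasDerivAt (equivariantDeriv f)
      (2 * deriv f w ^ 3 * schwarzian f w / deriv (deriv f) w ^ 2) w := by
  have H : HasDerivAt (equivariantDeriv f) _ w := hf.differentiableAt.hasDerivAt.sub
    (((hf.deriv.differentiableAt.hasDerivAt.pow 2).const_mul 2).div
      hf.deriv.deriv.differentiableAt.hasDerivAt hf'')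
  refine H.congr_deriv ?_
  simp only [Pi.pow_apply]
  -- at `f' w = 0` the Schwarzian takes its junk value, but both sides vanish
  rcases eq_or_ne (deriv f w) 0 with hf' | hf'
  · simp [hf']
  · unfold schwarzian
    field_simp
    ring

lemma deriv_equivariantDeriv_eventuallyEq {f : ℂ → ℂ} {z : ℂ} (hf : AnalyticAt ℂ f z)
    (hf'' : deriv (deriv f) z ≠ 0) :
    deriv (equivariantDeriv f)
      =ᶠ[𝓝 z] fun w => 2 * deriv f w ^ 3 * schwarzian f w / deriv (deriv f) w ^ 2 := by
  filter_upwards [hf.eventually_analyticAt,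
    hf.deriv.deriv.continuousAt.eventually_ne hf''] with w hfw hfw''
  exact (hasDerivAt_equivariantDeriv hfw hfw'').deriv

lemma hasDerivAt_deriv_equivariantDeriv {f : ℂ → ℂ} {z : ℂ} (hf : AnalyticAt ℂ f z)
    (hf' : deriv f z ≠ 0) (hf'' : deriv (deriv f) z ≠ 0) :
    HasDerivAt (deriv (equivariantDeriv f))
      (2 * deriv f z ^ 3 * (deriv (deriv f) z * deriv (schwarzian f) z
        - 2 * deriv f z * schwarzian f z ^ 2) / deriv (deriv f) z ^ 3) z := by
  have H : HasDerivAt (fun w => 2 * deriv f w ^ 3 * schwarzian f w / deriv (deriv f) w ^ 2)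
      _ z := (((hf.deriv.differentiableAt.hasDerivAt.pow 3).const_mul 2).mul
    (hf.schwarzian hf').differentiableAt.hasDerivAt).div
      (hf.deriv.deriv.differentiableAt.hasDerivAt.pow 2) (pow_ne_zero 2 hf'')
  refine (H.congr_of_eventuallyEq (deriv_equivariantDeriv_eventuallyEq hf hf'')).congr_deriv ?_
  simp only [Pi.pow_apply, Pi.mul_apply]
  rw [deriv_deriv_deriv_eq_schwarzian hf']
  field_simp
  ring

lemma second_iterate_identity {K : Type*} [Field K] [NeZero (2 : K)] {F A B s s' : K}
    (hA : A ≠ 0) (hB : B ≠ 0)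
    (h : s ^ 2 - B / (2 * A) * s' ≠ 0) :
    F - 2 * A ^ 2 / B
        - 2 * (2 * A ^ 3 * s / B ^ 2) ^ 2 / (2 * A ^ 3 * (B * s' - 2 * A * s ^ 2) / B ^ 3)
      = F + A * s' / (s ^ 2 - B / (2 * A) * s') := by
  have hden : s ^ 2 - B / (2 * A) * s' = -(B * s' - 2 * A * s ^ 2) / (2 * A) := by
    field_simp; ring
  rw [hden] at h ⊢
  have h' : B * s' - 2 * A * s ^ 2 ≠ 0 := fun h0 => h (by rw [h0, neg_zero, zero_div])
  field_simp
  ring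

theorem D_second_iterate_general
    (f g s : ℂ → ℂ) (z : ℂ)
    (hf : AnalyticAt ℂ f z)
    (hf' : deriv f z ≠ 0) (hf'' : deriv (deriv f) z ≠ 0)
    (hs : s = fun w => schwarzian f w)
    (hg : g = fun w => f w - 2 * (deriv f w) ^ 2 / deriv (deriv f) w)
    (hden : s z ^ 2 - (deriv (deriv f) z / (2 * deriv f z)) * deriv s z ≠ 0) :
    g z - 2 * (deriv g z) ^ 2 / deriv (deriv g) z
      = f z + deriv f z * deriv s z
          / (s z ^ 2 - (deriv (deriv f) z / (2 * deriv f z)) * deriv s z) := by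
  obtain rfl : s = schwarzian f := hs
  obtain rfl : g = equivariantDeriv f := hg
  rw [(hasDerivAt_deriv_equivariantDeriv hf hf' hf'').deriv,
    (hasDerivAt_equivariantDeriv hf hf'').deriv]
  exact second_iterate_identity hf' hf'' hden

/-- The paper's second-iterate formula `D ∘ D = Id + X/(𝓗 + φ_X)`, expressing `D(D f)`
as the deformation of `D` by an invariant rational expression in the Schwarzian `s = S f`
and its derivative, with pre-Schwarzian `φ = −f''/(2f')`. -/
theorem D_second_iterate
    (f g s : ℂ → ℂ) (z : ℂ)
    (hf : AnalyticAt ℂ f z)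
    (hf' : deriv f z ≠ 0) (hf'' : deriv (deriv f) z ≠ 0)
    (hs : s = fun w => schwarzian f w)
    (hg : g = fun w => f w - 2 * (deriv f w) ^ 2 / deriv (deriv f) w)
    (hg'' : deriv (deriv g) z ≠ 0)
    (hden : s z ^ 2 - (deriv (deriv f) z / (2 * deriv f z)) * deriv s z ≠ 0) :
    g z - 2 * (deriv g z) ^ 2 / deriv (deriv g) z
      = f z + deriv f z * deriv s z
          / (s z ^ 2 - (deriv (deriv f) z / (2 * deriv f z)) * deriv s z) :=
  D_second_iterate_general f g s z hf hf' hf'' hs hg hden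
end

section
/- Let U ⊆ ℂ be open, let a, b, c, d ∈ ℂ with a·d − b·c = 1, set γ(z) = (a·z+b)/(c·z+d), and assume γ(z) ∈ U for all z ∈ U with c·z+d ≠ 0. Let k ∈ ℤ and let α, β : ℂ → ℂ be analytic on U with α(γ(z)) = (c·z+d)^k·α(z) and β(γ(z)) = (c·z+d)^{k+2}·β(z) for all z ∈ U with c·z+d ≠ 0. Define φ_{α,β}(w) = w + k·α(w)/(α'(w) + β(w)). Then for every z ∈ U such that c·z+d ≠ 0, α'(z) + β(z) ≠ 0, α'(γ(z)) + β(γ(z)) ≠ 0, and c·φ_{α,β}(z) + d ≠ 0, one has φ_{α,β}(γ(z)) = (a·φ_{α,β}(z) + b)/(c·φ_{α,β}(z) + d). -/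
/-!
Write `t = c z + d` and `w = k α(z) / (α'(z) + β(z))`, so that `φ(z) = z + w`. Differentiating
`α(γ z) = t^k α(z)`, where `γ'(z) = t⁻²`, gives `α'(γ z) = t^(k+1) (k c α(z) + t α'(z))`; adding
`β(γ z) = t^(k+2) β(z)` yields `α'(γ z) + β(γ z) = t^(k+1) (α'(z) + β(z)) (c (z + w) + d)`.
Hence `φ(γ z) = γ z + w / (t (c (z + w) + d))`, and this equals `γ (z + w)` by a Möbius identity.
-/

open Filter Topology

section
variable {𝕜 : Type*} [NontriviallyNormedField 𝕜] {a b c d z : 𝕜}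

theorem mobius_add_div_eq (hdet : a * d - b * c = 1) (w : 𝕜) (hz : c * z + d ≠ 0)
    (hzw : c * (z + w) + d ≠ 0) :
    (a * z + b) / (c * z + d) + w / ((c * z + d) * (c * (z + w) + d))
      = (a * (z + w) + b) / (c * (z + w) + d) := by
  rw [div_add_div _ _ hz (mul_ne_zero hz hzw),
    div_eq_div_iff (mul_ne_zero hz (mul_ne_zero hz hzw)) hzw]
  linear_combination (-1) * w * ((c * z + d) ^ 2 + c * w * (c * z + d)) * hdet

theorem hasDerivAt_mul_add (c d z : 𝕜) : HasDerivAt (fun w => c * w + d) c z := by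
  simpa using ((hasDerivAt_id z).const_mul c).add_const d

theorem hasDerivAt_mobius (hz : c * z + d ≠ 0) :
    HasDerivAt (fun w => (a * w + b) / (c * w + d)) ((a * d - b * c) / (c * z + d) ^ 2) z := by
  have h := (hasDerivAt_mul_add a b z).div (hasDerivAt_mul_add c d z) hz
  rwa [show a * (c * z + d) - (a * z + b) * c = a * d - b * c by ring] at h

theorem eq_of_hasDerivAt_automorphic {f : 𝕜 → 𝕜} {f' f'γ : 𝕜} (k : ℤ)
    (hdet : a * d - b * c = 1) (hz : c * z + d ≠ 0)
    (hf : HasDerivAt f f' z) (hfγ : HasDerivAt f f'γ ((a * z + b) / (c * z + d)))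
    (hauto : (fun w => f ((a * w + b) / (c * w + d))) =ᶠ[𝓝 z] fun w => (c * w + d) ^ k * f w) :
    f'γ = (c * z + d) ^ (k + 1) * (k * c * f z + (c * z + d) * f') := by
  have hfactor : HasDerivAt (fun w => (c * w + d) ^ k) (k * (c * z + d) ^ (k - 1) * c) z :=
    (hasDerivAt_zpow k _ (Or.inl hz)).comp z (hasDerivAt_mul_add c d z)
  have hchain := hfγ.comp z (hasDerivAt_mobius (a := a) (b := b) hz)
  have hprod := (hfactor.mul hf).congr_of_eventuallyEq hauto
  have key := hchain.unique hprod
  rw [hdet] at key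
  set t := c * z + d
  have h1 : t ^ (k + 1) = t ^ (k - 1) * t ^ 2 := by
    rw [show k + 1 = k - 1 + 2 by ring, zpow_add₀ hz, zpow_two, sq]
  have h2 : t ^ k = t ^ (k - 1) * t := by
    rw [← zpow_add_one₀ hz]; ring_nf
  rw [h2] at key
  rw [h1]
  field_simp at key
  linear_combination key

theorem add_div_automorphic_eq_mobius {A A' B Aγ Sγ : 𝕜} (k : ℤ) (hdet : a * d - b * c = 1)
    (hz : c * z + d ≠ 0) (hS : A' + B ≠ 0)
    (hzw : c * (z + k * A / (A' + B)) + d ≠ 0)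
    (hAγ : Aγ = (c * z + d) ^ k * A)
    (hSγ : Sγ = (c * z + d) ^ (k + 1) * (k * c * A + (c * z + d) * (A' + B))) :
    (a * z + b) / (c * z + d) + k * Aγ / Sγ
      = (a * (z + k * A / (A' + B)) + b) / (c * (z + k * A / (A' + B)) + d) := by
  set t := c * z + d
  set w := k * A / (A' + B)
  have hfactor : k * c * A + t * (A' + B) = (A' + B) * (c * (z + w) + d) := by
    simp only [w, t]; field_simp; ring
  have hterm : k * Aγ / Sγ = w / (t * (c * (z + w) + d)) := by
    rw [hAγ, hSγ, hfactor, zpow_add_one₀ hz]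
    have htk : t ^ k ≠ 0 := zpow_ne_zero k hz
    simp only [w]; field_simp
  rw [hterm]
  exact mobius_add_div_eq hdet w hz hzw
end

theorem biweight_phi_operator_equivariance_general
    (U : Set ℂ) (hU : IsOpen U)
    (a b c d : ℂ) (hdet : a * d - b * c = 1)
    (γ : ℂ → ℂ) (hγ : γ = fun z => (a * z + b) / (c * z + d))
    (hmaps : ∀ z ∈ U, c * z + d ≠ 0 → γ z ∈ U)
    (k : ℤ) (α β : ℂ → ℂ)
    (hα : AnalyticOnNhd ℂ α U)
    (hautoα : ∀ z ∈ U, c * z + d ≠ 0 → α (γ z) = (c * z + d) ^ k * α z)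
    (hautoβ : ∀ z ∈ U, c * z + d ≠ 0 → β (γ z) = (c * z + d) ^ (k + 2) * β z)
    (φ : ℂ → ℂ) (hφ : φ = fun w => w + (k : ℂ) * α w / (deriv α w + β w)) :
    ∀ z ∈ U, c * z + d ≠ 0 →
      deriv α z + β z ≠ 0 → deriv α (γ z) + β (γ z) ≠ 0 →
      c * φ z + d ≠ 0 →
      φ (γ z) = (a * φ z + b) / (c * φ z + d) := by
  subst hγ hφ
  intro z hz hzd hS _ hφz
  have hlocal : ∀ᶠ w in 𝓝 z, α ((a * w + b) / (c * w + d)) = (c * w + d) ^ k * α w := by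
    have hopen : IsOpen {w : ℂ | c * w + d ≠ 0} := isOpen_ne_fun (by fun_prop) (by fun_prop)
    filter_upwards [hU.mem_nhds hz, hopen.mem_nhds hzd] with w hw hwd using hautoα w hw hwd
  have hderiv := eq_of_hasDerivAt_automorphic k hdet hzd (hα z hz).differentiableAt.hasDerivAt
    (hα _ (hmaps z hz hzd)).differentiableAt.hasDerivAt hlocal
  refine add_div_automorphic_eq_mobius k hdet hzd hS hφz (hautoα z hz hzd) ?_
  rw [hderiv, hautoβ z hz hzd, show k + 2 = k + 1 + 1 by ring, zpow_add_one₀ hzd (k + 1)]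
  ring

/-- Equivariance of the paper's biweight `(k, k+2)` φ-operator
`φ_{α,β}(z) = z + k·α/(α' + β)`. -/
theorem biweight_phi_operator_equivariance
    (U : Set ℂ) (hU : IsOpen U)
    (a b c d : ℂ) (hdet : a * d - b * c = 1)
    (γ : ℂ → ℂ) (hγ : γ = fun z => (a * z + b) / (c * z + d))
    (hmaps : ∀ z ∈ U, c * z + d ≠ 0 → γ z ∈ U)
    (k : ℤ) (α β : ℂ → ℂ)
    (hα : AnalyticOnNhd ℂ α U) (hβ : AnalyticOnNhd ℂ β U)
    (hautoα : ∀ z ∈ U, c * z + d ≠ 0 → α (γ z) = (c * z + d) ^ k * α z)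
    (hautoβ : ∀ z ∈ U, c * z + d ≠ 0 → β (γ z) = (c * z + d) ^ (k + 2) * β z)
    (φ : ℂ → ℂ) (hφ : φ = fun w => w + (k : ℂ) * α w / (deriv α w + β w)) :
    ∀ z ∈ U, c * z + d ≠ 0 →
      deriv α z + β z ≠ 0 → deriv α (γ z) + β (γ z) ≠ 0 →
      c * φ z + d ≠ 0 →
      φ (γ z) = (a * φ z + b) / (c * φ z + d) :=
  biweight_phi_operator_equivariance_general U hU a b c d hdet γ hγ hmaps k α β hα hautoα hautoβ φ
    hφ
end
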